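/- A closed 1-form on a star-shaped (convex) open subset of ℝ² is exact: if P, Q : ℝ² → ℝ are continuously differentiable on all of ℝ² and satisfy ∂P/∂y = ∂Q/∂x everywhere, then there exists f : ℝ² → ℝ with ∂f/∂x = P and ∂f/∂y = Q (Poincaré lemma for 1-forms on ℝ²). -/

import Mathlib

open MeasureTheory intervalIntegral Metric

theorem poincare_lemma_R2 (P Q : ℝ × ℝ → ℝ) (hP : ContDiff ℝ 1 P) (hQ : ContDiff ℝ 1 Q)
    (hclosed : ∀ p : ℝ × ℝ, fderiv ℝ P p (0, 1) = fderiv ℝ Q p (1, 0)) :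
    ∃ f : ℝ × ℝ → ℝ, Differentiable ℝ f ∧
      ∀ p : ℝ × ℝ, fderiv ℝ f p (1, 0) = P p ∧ fderiv ℝ f p (0, 1) = Q p := by
  have hPd : Differentiable ℝ P := hP.differentiable one_ne_zero
  have hQd : Differentiable ℝ Q := hQ.differentiable one_ne_zero
  have hPc : Continuous P := hPd.continuous
  have hQc : Continuous Q := hQd.continuous
  have hP' : Continuous (fderiv ℝ P) := hP.continuous_fderiv one_ne_zero
  have hQ' : Continuous (fderiv ℝ Q) := hQ.continuous_fderiv one_ne_zero
  -- the integrand
  set F : (ℝ × ℝ) → ℝ → ℝ := fun p t => p.1 * P (t • p) + p.2 * Q (t • p) with hF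
  -- its derivative in p
  set F' : (ℝ × ℝ) → ℝ → (ℝ × ℝ) →L[ℝ] ℝ := fun p t =>
    (p.1 • (t • fderiv ℝ P (t • p)) + P (t • p) • ContinuousLinearMap.fst ℝ ℝ ℝ) +
    (p.2 • (t • fderiv ℝ Q (t • p)) + Q (t • p) • ContinuousLinearMap.snd ℝ ℝ ℝ) with hF'
  have hsmul : ∀ (t : ℝ) (p : ℝ × ℝ),
      HasFDerivAt (fun q : ℝ × ℝ => t • q) (t • ContinuousLinearMap.id ℝ (ℝ × ℝ)) p := by
    intro t p
    exact (ContinuousLinearMap.id ℝ (ℝ × ℝ)).hasFDerivAt.const_smul t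
  have hcompP : ∀ (t : ℝ) (p : ℝ × ℝ),
      HasFDerivAt (fun q : ℝ × ℝ => P (t • q)) (t • fderiv ℝ P (t • p)) p := by
    intro t p
    have := (hPd (t • p)).hasFDerivAt.comp p (hsmul t p)
    simpa [ContinuousLinearMap.comp_smul, Function.comp_def] using this
  have hcompQ : ∀ (t : ℝ) (p : ℝ × ℝ),
      HasFDerivAt (fun q : ℝ × ℝ => Q (t • q)) (t • fderiv ℝ Q (t • p)) p := by
    intro t p
    have := (hQd (t • p)).hasFDerivAt.comp p (hsmul t p)
    simpa [ContinuousLinearMap.comp_smul, Function.comp_def] using this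
  have hderivF : ∀ (t : ℝ) (p : ℝ × ℝ), HasFDerivAt (fun q => F q t) (F' p t) p := by
    intro t p
    exact (hasFDerivAt_fst.mul (hcompP t p)).add (hasFDerivAt_snd.mul (hcompQ t p))
  -- continuity of F' jointly
  have hc1 : Continuous fun q : ℝ × (ℝ × ℝ) => q.1 • q.2 := continuous_fst.smul continuous_snd
  have hF'cont : Continuous fun q : ℝ × (ℝ × ℝ) => F' q.2 q.1 :=
    ((continuous_snd.fst.smul (continuous_fst.smul (hP'.comp hc1))).add
      ((hPc.comp hc1).smul continuous_const)).add
    ((continuous_snd.snd.smul (continuous_fst.smul (hQ'.comp hc1))).add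
      ((hQc.comp hc1).smul continuous_const))
  have hFcont : ∀ p : ℝ × ℝ, Continuous (F p) := fun p =>
    (continuous_const.mul (hPc.comp (continuous_id.smul continuous_const))).add
    (continuous_const.mul (hQc.comp (continuous_id.smul continuous_const)))
  -- the candidate potential
  set f : ℝ × ℝ → ℝ := fun p => ∫ t in (0:ℝ)..1, F p t with hf
  -- differentiation under the integral sign
  have key : ∀ p₀ : ℝ × ℝ, HasFDerivAt f (∫ t in (0:ℝ)..1, F' p₀ t) p₀ := by
    intro p₀
    -- uniform bound on the compact set uIcc 0 1 × closedBall p₀ 1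
    obtain ⟨C, hC⟩ : ∃ C, ∀ q ∈ (Set.uIcc (0:ℝ) 1) ×ˢ closedBall p₀ 1,
        ‖F' q.2 q.1‖ ≤ C := by
      obtain ⟨C, hC⟩ := ((isCompact_uIcc).prod (isCompact_closedBall p₀ 1)).exists_bound_of_continuousOn
        hF'cont.continuousOn
      exact ⟨C, fun q hq => by simpa using hC q hq⟩
    apply intervalIntegral.hasFDerivAt_integral_of_dominated_of_fderiv_le
      (F := F) (F' := F') (bound := fun _ => C) (ball_mem_nhds p₀ one_pos)
    · exact Filter.Eventually.of_forall fun p => (hFcont p).aestronglyMeasurable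
    · exact (hFcont p₀).intervalIntegrable 0 1
    · exact (hF'cont.comp (continuous_id.prodMk continuous_const)).aestronglyMeasurable
    · refine Filter.Eventually.of_forall fun t ht p hp => ?_
      exact hC (t, p) ⟨Set.uIoc_subset_uIcc ht, ball_subset_closedBall hp⟩
    · exact intervalIntegrable_const
    · exact Filter.Eventually.of_forall fun t _ p _ => hderivF t p
  refine ⟨f, fun p => (key p).differentiableAt, fun p => ?_⟩
  have hfd : fderiv ℝ f p = ∫ t in (0:ℝ)..1, F' p t := (key p).fderiv
  have hint : IntervalIntegrable (F' p) volume 0 1 :=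
    (hF'cont.comp (continuous_id.prodMk continuous_const)).intervalIntegrable 0 1
  have happly : ∀ v : ℝ × ℝ, fderiv ℝ f p v = ∫ t in (0:ℝ)..1, F' p t v := by
    intro v
    rw [hfd]
    exact ((ContinuousLinearMap.apply ℝ ℝ v).intervalIntegral_comp_comm hint).symm
  have eL : ∀ L : (ℝ × ℝ) →L[ℝ] ℝ, L p = p.1 * L (1, 0) + p.2 * L (0, 1) := by
    intro L
    calc L p = L (p.1 • ((1:ℝ), (0:ℝ)) + p.2 • ((0:ℝ), (1:ℝ))) := by
          congr 1; simp [Prod.ext_iff]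
      _ = p.1 * L (1, 0) + p.2 * L (0, 1) := by
          rw [L.map_add, L.map_smul, L.map_smul]; simp [smul_eq_mul]
  constructor
  · rw [happly]
    -- show the integrand is the derivative of s ↦ s * P (s • p)
    have hg : ∀ t : ℝ, HasDerivAt (fun s : ℝ => s * P (s • p)) (F' p t (1, 0)) t := by
      intro t
      have h1 : HasDerivAt (fun s : ℝ => s • p) p t := by
        simpa using (hasDerivAt_id t).smul_const p
      have h2 : HasDerivAt (fun s : ℝ => P (s • p)) (fderiv ℝ P (t • p) p) t :=
        (hPd (t • p)).hasFDerivAt.comp_hasDerivAt t h1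
      have h3 : HasDerivAt (fun s : ℝ => s * P (s • p))
          (1 * P (t • p) + t * fderiv ℝ P (t • p) p) t := (hasDerivAt_id' t).mul h2
      convert h3 using 1
      have e1 := eL (fderiv ℝ P (t • p))
      simp only [hF', ContinuousLinearMap.add_apply, ContinuousLinearMap.smul_apply,
        ContinuousLinearMap.coe_fst', ContinuousLinearMap.coe_snd']
      rw [e1, hclosed (t • p)]
      simp [smul_eq_mul]
      ring
    have : (∫ t in (0:ℝ)..1, F' p t (1, 0)) =
        (fun s : ℝ => s * P (s • p)) 1 - (fun s : ℝ => s * P (s • p)) 0 := by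
      apply intervalIntegral.integral_eq_sub_of_hasDerivAt (fun t _ => hg t)
      exact ((hF'cont.comp (continuous_id.prodMk continuous_const)).clm_apply
        continuous_const).intervalIntegrable 0 1
    simpa using this
  · rw [happly]
    have hg : ∀ t : ℝ, HasDerivAt (fun s : ℝ => s * Q (s • p)) (F' p t (0, 1)) t := by
      intro t
      have h1 : HasDerivAt (fun s : ℝ => s • p) p t := by
        simpa using (hasDerivAt_id t).smul_const p
      have h2 : HasDerivAt (fun s : ℝ => Q (s • p)) (fderiv ℝ Q (t • p) p) t :=
        (hQd (t • p)).hasFDerivAt.comp_hasDerivAt t h1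
      have h3 : HasDerivAt (fun s : ℝ => s * Q (s • p))
          (1 * Q (t • p) + t * fderiv ℝ Q (t • p) p) t := (hasDerivAt_id' t).mul h2
      convert h3 using 1
      have e1 := eL (fderiv ℝ Q (t • p))
      simp only [hF', ContinuousLinearMap.add_apply, ContinuousLinearMap.smul_apply,
        ContinuousLinearMap.coe_fst', ContinuousLinearMap.coe_snd']
      rw [e1, hclosed (t • p)]
      simp [smul_eq_mul]
      ring
    have : (∫ t in (0:ℝ)..1, F' p t (0, 1)) =
        (fun s : ℝ => s * Q (s • p)) 1 - (fun s : ℝ => s * Q (s • p)) 0 := by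
      apply intervalIntegral.integral_eq_sub_of_hasDerivAt (fun t _ => hg t)
      exact ((hF'cont.comp (continuous_id.prodMk continuous_const)).clm_apply
        continuous_const).intervalIntegrable 0 1
    simpa using this
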